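/- arXiv:1404.0466 — 4 statements merged into one kernel-verified Lean document; each statement's English description precedes it below -/
import Mathlib

section
/- Let L be an invertible lower-triangular n×n real matrix and let Γ be a lower-triangular n×n real matrix. If Γ Lᵀ + L Γᵀ = 0, then Γ = 0. In other words, the linear map Γ ↦ Γ Lᵀ + L Γᵀ is injective on the space of lower-triangular matrices. -/
open Matrix

/-- If `L` is invertible lower-triangular and `Γ` is lower-triangular with
`Γ * Lᵀ + L * Γᵀ = 0`, then `Γ = 0`. -/
theorem lowerTriangular_kroneckerSumLike_injective (n : ℕ)
    (L Γ : Matrix (Fin n) (Fin n) ℝ)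
    (hLinv : IsUnit L)
    (hL : ∀ i j, i < j → L i j = 0)
    (hΓ : ∀ i j, i < j → Γ i j = 0)
    (h : Γ * Lᵀ + L * Γᵀ = 0) :
    Γ = 0 := by
  have hLi : Invertible L := hLinv.invertible
  -- Lᵀ is block triangular wrt id, hence so is its inverse
  have hLT : (Lᵀ).BlockTriangular (id : Fin n → Fin n) := by
    intro i j hij
    exact hL j i hij
  have : Invertible (Lᵀ) := L.invertibleTranspose
  have hLTinv : (Lᵀ)⁻¹.BlockTriangular (id : Fin n → Fin n) :=
    blockTriangular_inv_of_blockTriangular hLT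
  have hinv : (Lᵀ)⁻¹ = (L⁻¹)ᵀ := (transpose_nonsing_inv L).symm
  -- so L⁻¹ is lower triangular
  have hLinvLT : ∀ i j : Fin n, i < j → L⁻¹ i j = 0 := by
    intro i j hij
    have := hLTinv (i := j) (j := i) hij
    rwa [hinv, transpose_apply] at this
  set X := L⁻¹ * Γ with hX
  have hXlt : ∀ i j : Fin n, i < j → X i j = 0 := by
    intro i j hij
    simp only [hX, mul_apply]
    refine Finset.sum_eq_zero fun k _ => ?_
    rcases lt_or_ge i k with hik | hik
    · rw [hLinvLT i k hik, zero_mul]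
    · rw [hΓ k j (lt_of_le_of_lt hik hij), mul_zero]
  have hskew : X + Xᵀ = 0 := by
    have h2 : L⁻¹ * (Γ * Lᵀ + L * Γᵀ) * (L⁻¹)ᵀ = 0 := by rw [h]; simp
    have hLL : L⁻¹ * L = 1 := inv_mul_of_invertible L
    have hLLT : Lᵀ * (L⁻¹)ᵀ = 1 := by
      rw [← transpose_mul, hLL, transpose_one]
    calc X + Xᵀ = L⁻¹ * Γ * (Lᵀ * (L⁻¹)ᵀ) + (L⁻¹ * L) * Γᵀ * (L⁻¹)ᵀ := by
          rw [hLL, hLLT, one_mul, mul_one, hX, transpose_mul, transpose_nonsing_inv]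
      _ = L⁻¹ * (Γ * Lᵀ + L * Γᵀ) * (L⁻¹)ᵀ := by noncomm_ring
      _ = 0 := h2
  have hX0 : X = 0 := by
    ext i j
    have hij : X i j + X j i = 0 := by
      have := congrFun (congrFun hskew i) j
      simpa using this
    rcases lt_trichotomy i j with hlt | heq | hgt
    · simpa using hXlt i j hlt
    · subst heq
      have : (2 : ℝ) * X i i = 0 := by linarith
      simpa using by linarith
    · rw [hXlt j i hgt, add_zero] at hij
      simpa using hij
  have : Γ = L * X := by rw [hX, ← mul_assoc, mul_inv_of_invertible, one_mul]
  rw [this, hX0, mul_zero]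
end

section
/- Let L be an invertible lower-triangular n×n real matrix and let Γ be a lower-triangular n×n real matrix satisfying Γ Lᵀ + L Γᵀ = 0. Then L⁻¹ Γ is a diagonal matrix; equivalently, there exists a diagonal matrix D such that Γ = L D. -/
/-!
Put `M = L⁻¹ * Γ`. Inverses and products of lower-triangular matrices are lower-triangular, so `M`
is lower-triangular, and `Γ = L * M` turns the constraint into `L * (M + Mᵀ) * Lᵀ = 0`. Cancelling
the invertible factors shows that `M` is skew-symmetric, and a lower-triangular skew-symmetric
matrix vanishes off the diagonal.
-/

open Matrix

namespace Matrix

variable {ι R : Type*}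

theorem inv_mul_lowerTriangular [LinearOrder ι] [Fintype ι] [DecidableEq ι] [CommRing R]
    {L Γ : Matrix ι ι R} (hLinv : IsUnit L) (hL : ∀ i j, i < j → L i j = 0)
    (hΓ : ∀ i j, i < j → Γ i j = 0) : ∀ i j, i < j → (L⁻¹ * Γ) i j = 0 := by
  have : Invertible L := hLinv.invertible
  have hLinv_lower : L⁻¹.BlockTriangular OrderDual.toDual :=
    blockTriangular_inv_of_blockTriangular fun i j hij => hL i j hij
  exact fun i j hij => hLinv_lower.mul (fun i j hij => hΓ i j hij) hij

theorem add_transpose_eq_zero_of_mul_mul_transpose_add [Fintype ι] [DecidableEq ι] [CommRing R]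
    {L M : Matrix ι ι R} (hL : IsUnit L) (h : L * M * Lᵀ + L * (L * M)ᵀ = 0) :
    M + Mᵀ = 0 := by
  have hsandwich : L * (M + Mᵀ) * Lᵀ = L * 0 * Lᵀ := by
    rw [mul_zero, zero_mul, ← h, transpose_mul, mul_add, add_mul, mul_assoc L Mᵀ]
  exact hL.mul_left_cancel <| ((isUnit_transpose L).mpr hL).mul_right_cancel hsandwich

theorem apply_eq_zero_of_lowerTriangular_of_add_transpose_eq_zero [LinearOrder ι] [AddGroup R]
    {M : Matrix ι ι R} (hM : ∀ i j, i < j → M i j = 0) (hskew : M + Mᵀ = 0) {i j : ι}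
    (hij : i ≠ j) : M i j = 0 := by
  rcases hij.lt_or_gt with hlt | hgt
  · exact hM i j hlt
  · have hji : M i j + M j i = 0 := congr_fun₂ hskew i j
    rwa [hM j i hgt, add_zero] at hji

end Matrix

/-- If `L` is invertible lower-triangular and `Γ` is lower-triangular with
`Γ * Lᵀ + L * Γᵀ = 0`, then `L⁻¹ * Γ` is diagonal; equivalently `Γ = L * D`
for some diagonal matrix `D`. -/
theorem inv_mul_isDiag_of_lowerTriangular (n : ℕ)
    (L Γ : Matrix (Fin n) (Fin n) ℝ)
    (hLinv : IsUnit L)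
    (hL : ∀ i j, i < j → L i j = 0)
    (hΓ : ∀ i j, i < j → Γ i j = 0)
    (h : Γ * Lᵀ + L * Γᵀ = 0) :
    (∀ i j, i ≠ j → (L⁻¹ * Γ) i j = 0) ∧
    ∃ D : Matrix (Fin n) (Fin n) ℝ, (∀ i j, i ≠ j → D i j = 0) ∧ Γ = L * D := by
  set M := L⁻¹ * Γ
  have hΓ_eq : Γ = L * M :=
    (mul_nonsing_inv_cancel_left L Γ ((isUnit_iff_isUnit_det L).mp hLinv)).symm
  have hM_lower : ∀ i j, i < j → M i j = 0 := inv_mul_lowerTriangular hLinv hL hΓ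
  have hM_skew : M + Mᵀ = 0 :=
    add_transpose_eq_zero_of_mul_mul_transpose_add hLinv (hΓ_eq ▸ h)
  have hM_offDiag : ∀ i j, i ≠ j → M i j = 0 := fun _ _ hij =>
    apply_eq_zero_of_lowerTriangular_of_add_transpose_eq_zero hM_lower hM_skew hij
  exact ⟨hM_offDiag, M, hM_offDiag, hΓ_eq⟩
end

section
/- Let L be an invertible lower-triangular n×n real matrix. Then for every symmetric n×n real matrix Δ there exists a unique lower-triangular n×n real matrix Γ such that Γ Lᵀ + L Γᵀ = Δ. That is, the linear map Γ ↦ Γ Lᵀ + L Γᵀ is a bijection from the space of lower-triangular matrices onto the space of symmetric matrices. -/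
open Matrix

/-- For invertible lower-triangular `L`, the map `Γ ↦ Γ * Lᵀ + L * Γᵀ` is a
bijection from lower-triangular matrices onto symmetric matrices: every
symmetric `Δ` has a unique lower-triangular preimage. -/
theorem existsUnique_lowerTriangular_solution (n : ℕ)
    (L : Matrix (Fin n) (Fin n) ℝ)
    (hLinv : IsUnit L)
    (hL : ∀ i j, i < j → L i j = 0) :
    ∀ Δ : Matrix (Fin n) (Fin n) ℝ, Δᵀ = Δ →
      ∃! Γ : Matrix (Fin n) (Fin n) ℝ,
        (∀ i j, i < j → Γ i j = 0) ∧ Γ * Lᵀ + L * Γᵀ = Δ := by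
  intro Δ hΔ
  have hLdet : IsUnit L.det := (Matrix.isUnit_iff_isUnit_det L).mp hLinv
  haveI : Invertible L := L.invertibleOfIsUnitDet hLdet
  have hmul : L * L⁻¹ = 1 := Matrix.mul_nonsing_inv L hLdet
  have hmul' : L⁻¹ * L = 1 := Matrix.nonsing_inv_mul L hLdet
  have hBT : L.BlockTriangular (OrderDual.toDual : Fin n → (Fin n)ᵒᵈ) :=
    fun i j h => hL i j h
  have hBTinv : L⁻¹.BlockTriangular (OrderDual.toDual : Fin n → (Fin n)ᵒᵈ) :=
    Matrix.blockTriangular_inv_of_blockTriangular hBT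
  set S : Matrix (Fin n) (Fin n) ℝ := L⁻¹ * Δ * L⁻¹ᵀ with hSdef
  have hS : Sᵀ = S := by
    simp only [hSdef, Matrix.transpose_mul, Matrix.transpose_transpose, hΔ, Matrix.mul_assoc]
  -- the canonical lower-triangular solution of W + Wᵀ = S
  set Y : Matrix (Fin n) (Fin n) ℝ :=
    Matrix.of (fun i j => if j < i then S i j else if i = j then S i j / 2 else 0) with hYdef
  have hYlt : ∀ i j : Fin n, i < j → Y i j = 0 := by
    intro i j hij
    simp [hYdef, not_lt_of_gt hij, hij.ne]
  have hYBT : Y.BlockTriangular (OrderDual.toDual : Fin n → (Fin n)ᵒᵈ) :=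
    fun i j h => hYlt i j h
  have hYS : Y + Yᵀ = S := by
    ext i j
    rcases lt_trichotomy i j with h | h | h
    · have : S j i = S i j := by
        conv_lhs => rw [← hS]
        rfl
      simp [hYdef, h, not_lt_of_gt h, h.ne, h.ne', this]
    · subst h
      simp [hYdef]
    · simp [hYdef, h, not_lt_of_gt h, h.ne, h.ne']
  -- uniqueness of the lower-triangular solution of W + Wᵀ = S
  have huniq : ∀ W : Matrix (Fin n) (Fin n) ℝ,
      (∀ i j : Fin n, i < j → W i j = 0) → W + Wᵀ = S → W = Y := by
    intro W hWlt hWS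
    ext i j
    have hsum : W i j + W j i = S i j := congrFun (congrFun hWS i) j
    rcases lt_trichotomy i j with h | h | h
    · rw [hWlt i j h, hYlt i j h]
    · subst h
      simp [hYdef]
      linarith
    · have := hWlt j i h
      simp only [hYdef, Matrix.of_apply, if_pos h]
      linarith
  refine ⟨L * Y, ⟨?_, ?_⟩, ?_⟩
  · intro i j hij
    exact hBT.mul hYBT hij
  · have : L * Y * Lᵀ + L * (L * Y)ᵀ = L * (Y + Yᵀ) * Lᵀ := by
      rw [Matrix.transpose_mul, Matrix.mul_add, Matrix.add_mul]
      simp only [Matrix.mul_assoc]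
    rw [this, hYS, hSdef]
    calc L * (L⁻¹ * Δ * L⁻¹ᵀ) * Lᵀ
        = (L * L⁻¹) * Δ * (L * L⁻¹)ᵀ := by
          rw [Matrix.transpose_mul]
          simp only [Matrix.mul_assoc]
      _ = Δ := by rw [hmul]; simp
  · rintro Γ ⟨hΓlt, hΓeq⟩
    have hΓBT : Γ.BlockTriangular (OrderDual.toDual : Fin n → (Fin n)ᵒᵈ) :=
      fun i j h => hΓlt i j h
    set Z : Matrix (Fin n) (Fin n) ℝ := L⁻¹ * Γ with hZdef
    have hZlt : ∀ i j : Fin n, i < j → Z i j = 0 :=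
      fun i j h => hBTinv.mul hΓBT h
    have hZS : Z + Zᵀ = S := by
      have : L⁻¹ * (Γ * Lᵀ + L * Γᵀ) * L⁻¹ᵀ = Z + Zᵀ := by
        rw [Matrix.mul_add, Matrix.add_mul, hZdef, Matrix.transpose_mul]
        congr 1
        · calc L⁻¹ * (Γ * Lᵀ) * L⁻¹ᵀ = L⁻¹ * Γ * (L⁻¹ * L)ᵀ := by
                rw [Matrix.transpose_mul]; simp only [Matrix.mul_assoc]
          _ = L⁻¹ * Γ := by rw [hmul']; simp
        · calc L⁻¹ * (L * Γᵀ) * L⁻¹ᵀ = (L⁻¹ * L) * (Γᵀ * L⁻¹ᵀ) := by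
                simp only [Matrix.mul_assoc]
          _ = Γᵀ * L⁻¹ᵀ := by rw [hmul']; simp
      rw [← this, hΓeq, hSdef]
    have hZY : Z = Y := huniq Z hZlt hZS
    calc Γ = L * (L⁻¹ * Γ) := by rw [← Matrix.mul_assoc, hmul, Matrix.one_mul]
      _ = L * Y := by rw [← hZdef, hZY]
end

section
/- Let C be a function from n×n real matrices to n×n real matrices such that for every symmetric positive-definite matrix B, C(B) is lower-triangular with strictly positive diagonal entries and C(B) C(B)ᵀ = B. Then for every symmetric positive-definite matrix A, setting L = C(A), the map C is Fréchet differentiable at A within the subspace of symmetric matrices: there exists a continuous linear map D on matrices such that C has Fréchet derivative D at A within the set of symmetric matrices, and for every symmetric matrix Δ, the matrix D(Δ) is lower-triangular and satisfies D(Δ) Lᵀ + L D(Δ)ᵀ = Δ. -/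
open Matrix

attribute [local instance] Matrix.normedAddCommGroup Matrix.normedSpace

/-!
On lower-triangular matrices, `S(L) = L Lᵀ` (valued in the symmetric matrices) has derivative
`H ↦ H Lᵀ + L Hᵀ`, which is invertible, with inverse `Δ ↦ L Φ(L⁻¹ Δ L⁻ᵀ)`, where `Φ` keeps the
lower triangle and halves the diagonal. By the inverse function theorem `S` has a differentiable
local inverse near `A = S(C A)`. Its values are lower triangular with positive diagonal near `A`,
so they are Cholesky factors; in particular symmetric matrices near `A` are positive definite,
and by uniqueness of the Cholesky factor the local inverse agrees with `C` on them.
-/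

namespace Matrix

section LowerTriangular

variable {m R : Type*} [LinearOrder m]

theorem IsLowerTriangular.eq_diagonal [DecidableEq m] [Zero R] {M : Matrix m m R}
    (hM : M.IsLowerTriangular) (hMt : Mᵀ.IsLowerTriangular) : M = diagonal M.diag := by
  ext i j
  rcases lt_trichotomy i j with hij | rfl | hij
  · simp [hM hij, hij.ne]
  · simp
  · rw [diagonal_apply_ne _ hij.ne']
    exact hMt hij

theorem IsLowerTriangular.nonsing_inv [Fintype m] [DecidableEq m] [CommRing R]
    {M : Matrix m m R} (hM : M.IsLowerTriangular) : M⁻¹.IsLowerTriangular := by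
  by_cases hdet : IsUnit M.det
  · have := M.invertibleOfIsUnitDet hdet
    exact blockTriangular_inv_of_blockTriangular hM
  · rw [nonsing_inv_apply_not_isUnit M hdet]
    exact blockTriangular_zero

theorem IsLowerTriangular.isUnit_det [Fintype m] [DecidableEq m] [Field R] {M : Matrix m m R}
    (hM : M.IsLowerTriangular) (hd : ∀ i, M i i ≠ 0) : IsUnit M.det := by
  rw [det_of_isLowerTriangular M hM]
  exact (Finset.prod_ne_zero_iff.mpr fun i _ => hd i).isUnit

variable [Field R] {K X : Matrix m m R}

/-- The paper's `Φ`. -/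
def lowerHalf (X : Matrix m m R) : Matrix m m R :=
  of fun i j => if j < i then X i j else if i = j then X i j / 2 else 0

theorem lowerHalf_isLowerTriangular (X : Matrix m m R) : (lowerHalf X).IsLowerTriangular :=
  fun i j (hij : i < j) => by simp [lowerHalf, not_lt_of_gt hij, hij.ne]

variable [NeZero (2 : R)]

theorem IsSymm.lowerHalf_add_transpose (hX : X.IsSymm) : lowerHalf X + (lowerHalf X)ᵀ = X := by
  ext i j
  rcases lt_trichotomy i j with hij | rfl | hij
  · simp [lowerHalf, hij, not_lt_of_gt hij, hij.ne, hX.apply i j]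
  · simp [lowerHalf]
  · simp [lowerHalf, hij, not_lt_of_gt hij, hij.ne]

theorem IsLowerTriangular.lowerHalf_add_transpose (hK : K.IsLowerTriangular) :
    lowerHalf (K + Kᵀ) = K := by
  ext i j
  rcases lt_trichotomy i j with hij | rfl | hij
  · simp [lowerHalf, not_lt_of_gt hij, hij.ne, hK hij]
  · simp [lowerHalf]
  · simp [lowerHalf, hij, hK hij]

end LowerTriangular

theorem mul_transpose_add_mul_transpose_eq {m R : Type*} [Fintype m] [DecidableEq m] [CommRing R]
    {L : Matrix m m R} (hL : IsUnit L.det) (H : Matrix m m R) :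
    H * Lᵀ + L * Hᵀ = L * (L⁻¹ * H + (L⁻¹ * H)ᵀ) * Lᵀ := by
  have hLt : IsUnit Lᵀ.det := by rwa [det_transpose]
  rw [transpose_mul, transpose_nonsing_inv, Matrix.mul_add, Matrix.add_mul,
    mul_nonsing_inv_cancel_left _ _ hL, Matrix.mul_assoc L, Matrix.mul_assoc,
    nonsing_inv_mul _ hLt, Matrix.mul_one]

section Cholesky

variable {m R : Type*} [Fintype m] [DecidableEq m] [LinearOrder m] [Field R] [LinearOrder R]

def IsCholeskyFactor (B L : Matrix m m R) : Prop :=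
  L.IsLowerTriangular ∧ (∀ i, 0 < L i i) ∧ L * Lᵀ = B

variable {B L L₁ L₂ : Matrix m m R}

theorem IsCholeskyFactor.isUnit_det (hL : IsCholeskyFactor B L) : IsUnit L.det :=
  hL.1.isUnit_det fun i => (hL.2.1 i).ne'

variable [IsStrictOrderedRing R]

theorem IsCholeskyFactor.dotProduct_mulVec_pos (hL : IsCholeskyFactor B L) {x : m → R}
    (hx : x ≠ 0) : 0 < x ⬝ᵥ B *ᵥ x := by
  have hy : Lᵀ *ᵥ x ≠ 0 := by
    have hLt : IsUnit Lᵀ.det := by rw [det_transpose]; exact hL.isUnit_det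
    exact fun h => hx (mulVec_injective_iff_isUnit.mpr ((isUnit_iff_isUnit_det _).mpr hLt)
      (h.trans (mulVec_zero _).symm))
  rw [← hL.2.2, ← mulVec_mulVec, dotProduct_mulVec, ← mulVec_transpose]
  exact lt_of_le_of_ne (Finset.sum_nonneg fun i _ => mul_self_nonneg _)
    (Ne.symm (dotProduct_self_eq_zero.not.mpr hy))

theorem IsCholeskyFactor.unique (h₁ : IsCholeskyFactor B L₁)
    (h₂ : IsCholeskyFactor B L₂) : L₁ = L₂ := by
  have := L₁.invertibleOfIsUnitDet h₁.isUnit_det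
  have := L₂.invertibleOfIsUnitDet h₂.isUnit_det
  -- `D` is lower triangular, and `L₁ L₁ᵀ = L₂ L₂ᵀ` makes it equal to `(D⁻¹)ᵀ`, which is upper
  -- triangular; so `D` is diagonal with `D Dᵀ = 1` and, like `L₁ = L₂ D`, a positive diagonal.
  set D := L₂⁻¹ * L₁ with hD
  have hDinv : D⁻¹ = L₁⁻¹ * L₂ := by rw [hD, mul_inv_rev, inv_inv_of_invertible]
  have hDt : Dᵀ = D⁻¹ := by
    rw [hDinv, hD, transpose_mul, transpose_nonsing_inv, eq_comm,
      inv_mul_eq_iff_eq_mul_of_invertible, ← Matrix.mul_assoc, eq_comm,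
      mul_inv_eq_iff_eq_mul_of_invertible, h₁.2.2, h₂.2.2]
  have hDdiag : D = diagonal D.diag := IsLowerTriangular.eq_diagonal
    (h₂.1.nonsing_inv.mul h₁.1) (hDt ▸ hDinv ▸ h₁.1.nonsing_inv.mul h₂.1)
  have hL₁ : L₁ = L₂ * D := by rw [hD, mul_inv_cancel_left_of_invertible]
  have hd : ∀ i, D i i = 1 := by
    intro i
    have hsq : D i i * D i i = 1 := by
      have hDDt : D * Dᵀ = 1 := by rw [hDt, hDinv, hD]; simp [Matrix.mul_assoc]
      rw [hDdiag, diagonal_transpose, diagonal_mul_diagonal] at hDDt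
      simpa using congrFun (congrFun hDDt i) i
    have hpos : 0 < D i i := by
      have := h₁.2.1 i
      rw [hL₁, hDdiag, mul_diagonal] at this
      exact pos_of_mul_pos_right this (h₂.2.1 i).le
    nlinarith
  have hD1 : D = 1 := by
    rw [hDdiag]
    ext i j
    simp [diagonal, one_apply, hd]
  rw [hL₁, hD1, Matrix.mul_one]

end Cholesky

section Submodules

variable (m R : Type*)

def symmetricMatrices [Semiring R] : Submodule R (Matrix m m R) where
  carrier := {B | B.IsSymm}
  add_mem' := IsSymm.add
  zero_mem' := isSymm_zero
  smul_mem' c _ hB := hB.smul c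

variable [Fintype m] [DecidableEq m] [LinearOrder m]

def lowerTriangular [CommSemiring R] : Submodule R (Matrix m m R) :=
  Subalgebra.toSubmodule (blockTriangularSubalgebra R R (OrderDual.toDual : m → mᵒᵈ))

variable {m R} [Field R] [NeZero (2 : R)] {L : Matrix m m R}

/-- The derivative of `L ↦ L Lᵀ` along lower-triangular directions (the paper's `D_L S`). -/
noncomputable def lyapunovEquiv (hL : L.IsLowerTriangular) (hdet : IsUnit L.det) :
    lowerTriangular m R ≃ₗ[R] symmetricMatrices m R where
  toFun H := ⟨(H : Matrix m m R) * Lᵀ + L * (H : Matrix m m R)ᵀ, by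
    show IsSymm _
    simpa only [transpose_mul, transpose_transpose] using
      isSymm_add_transpose_self ((H : Matrix m m R) * Lᵀ)⟩
  map_add' H K := Subtype.ext <| by
    simp only [Submodule.coe_add, transpose_add, Matrix.add_mul, Matrix.mul_add]; abel
  map_smul' c H := Subtype.ext <| by
    simp [transpose_smul, smul_add]
  invFun Δ := ⟨L * lowerHalf (L⁻¹ * (Δ : Matrix m m R) * L⁻¹ᵀ),
    hL.mul (lowerHalf_isLowerTriangular _)⟩
  left_inv H := Subtype.ext <| by
    have := L.invertibleOfIsUnitDet hdet
    have hK : (L⁻¹ * (H : Matrix m m R)).IsLowerTriangular := hL.nonsing_inv.mul H.2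
    dsimp only
    rw [mul_transpose_add_mul_transpose_eq hdet]
    simp only [Matrix.mul_assoc, inv_mul_cancel_left_of_invertible, transpose_nonsing_inv,
      mul_inv_of_invertible, Matrix.mul_one]
    rw [hK.lowerHalf_add_transpose, mul_inv_cancel_left_of_invertible]
  right_inv Δ := Subtype.ext <| by
    have := L.invertibleOfIsUnitDet hdet
    have hX : (L⁻¹ * (Δ : Matrix m m R) * L⁻¹ᵀ).IsSymm := by
      simp [IsSymm, transpose_mul, Matrix.mul_assoc, Δ.2.eq]
    dsimp only
    rw [mul_transpose_add_mul_transpose_eq hdet, inv_mul_cancel_left_of_invertible,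
      hX.lowerHalf_add_transpose]
    simp [Matrix.mul_assoc, transpose_nonsing_inv]

end Submodules

section Derivative

open Filter Topology

variable {m : Type*} [Fintype m]

noncomputable def symmetricPart : Matrix m m ℝ →L[ℝ] symmetricMatrices m ℝ :=
  LinearMap.toContinuousLinearMap <|
    ((2⁻¹ : ℝ) • (LinearMap.id + (transposeLinearEquiv m m ℝ ℝ).toLinearMap)).codRestrict _
      fun B => by
        show IsSymm _
        simpa using (isSymm_add_transpose_self B).smul (2⁻¹ : ℝ)

theorem IsSymm.symmetricPart_apply {B : Matrix m m ℝ} (hB : B.IsSymm) :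
    symmetricPart B = ⟨B, hB⟩ := by
  ext1
  show (2⁻¹ : ℝ) • (B + Bᵀ) = B
  rw [hB.eq]
  module

variable [DecidableEq m] [LinearOrder m]

theorem hasStrictFDerivAt_symmetricPart_mul_transpose {L : lowerTriangular m ℝ}
    (hdet : IsUnit (L : Matrix m m ℝ).det) :
    HasStrictFDerivAt
      (fun H : lowerTriangular m ℝ => symmetricPart ((H : Matrix m m ℝ) * (H : Matrix m m ℝ)ᵀ))
      ((lyapunovEquiv L.2 hdet).toContinuousLinearEquiv :
        lowerTriangular m ℝ →L[ℝ] symmetricMatrices m ℝ) L := by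
  let mulTranspose : Matrix m m ℝ →L[ℝ] Matrix m m ℝ →L[ℝ] Matrix m m ℝ :=
    ((LinearMap.mul ℝ (Matrix m m ℝ)).compl₂
      (transposeLinearEquiv m m ℝ ℝ).toLinearMap).toContinuousBilinearMap
  have hsub := (lowerTriangular m ℝ).subtypeL.hasStrictFDerivAt (x := L)
  refine (symmetricPart.hasStrictFDerivAt.comp L
    (mulTranspose.hasStrictFDerivAt_of_bilinear hsub hsub)).congr_fderiv ?_
  ext H : 1
  have hsymm : ((L : Matrix m m ℝ) * (H : Matrix m m ℝ)ᵀ +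
      (H : Matrix m m ℝ) * (L : Matrix m m ℝ)ᵀ).IsSymm := by
    simpa only [transpose_mul, transpose_transpose] using
      isSymm_transpose_add_self ((H : Matrix m m ℝ) * (L : Matrix m m ℝ)ᵀ)
  change symmetricPart ((L : Matrix m m ℝ) * (H : Matrix m m ℝ)ᵀ +
    (H : Matrix m m ℝ) * (L : Matrix m m ℝ)ᵀ) = lyapunovEquiv L.2 hdet H
  rw [hsymm.symmetricPart_apply]
  exact Subtype.ext (add_comm _ _)

theorem IsCholeskyFactor.exists_hasFDerivAt_eventually_isCholeskyFactor {A L : Matrix m m ℝ}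
    (hL : IsCholeskyFactor A L) :
    ∃ F : Matrix m m ℝ → Matrix m m ℝ,
      HasFDerivAt F ((lowerTriangular m ℝ).subtypeL ∘L
        ((lyapunovEquiv hL.1 hL.isUnit_det).toContinuousLinearEquiv.symm :
          symmetricMatrices m ℝ →L[ℝ] lowerTriangular m ℝ) ∘L symmetricPart) A ∧
      ∀ᶠ B in 𝓝 A, B.IsSymm → IsCholeskyFactor B (F B) := by
  let L₀ : lowerTriangular m ℝ := ⟨L, hL.1⟩
  have hS := hasStrictFDerivAt_symmetricPart_mul_transpose (L := L₀) hL.isUnit_det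
  have hSL₀ : symmetricPart (L * Lᵀ) = symmetricPart A := by rw [hL.2.2]
  set g := hS.localInverse _ _ _
  have hg : HasFDerivAt g _ (symmetricPart A) := hSL₀ ▸ hS.to_localInverse.hasFDerivAt
  have hF := (lowerTriangular m ℝ).subtypeL.hasFDerivAt.comp A
    (hg.comp A symmetricPart.hasFDerivAt)
  refine ⟨_, hF, ?_⟩
  set F : Matrix m m ℝ → Matrix m m ℝ := fun B => g (symmetricPart B)
  have hFA : F A = L := congrArg Subtype.val (hSL₀ ▸ hS.localInverse_apply_image)
  have hright : ∀ᶠ B in 𝓝 A, symmetricPart (F B * (F B)ᵀ) = symmetricPart B :=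
    symmetricPart.continuous.continuousAt.eventually (hSL₀ ▸ hS.eventually_right_inverse)
  have hpos : ∀ᶠ B in 𝓝 A, ∀ i, 0 < F B i i := by
    refine Filter.eventually_all.2 fun i => ?_
    have hc : ContinuousAt (fun B => F B i i) A :=
      (continuous_apply_apply i i).continuousAt.comp hF.continuousAt
    exact continuousAt_const.eventually_lt hc (hFA ▸ hL.2.1 i)
  filter_upwards [hright, hpos] with B hBright hBpos hB
  refine ⟨(g (symmetricPart B)).2, hBpos, ?_⟩
  change F B * (F B)ᵀ = B
  simpa [(isSymm_mul_transpose_self (F B)).symmetricPart_apply, hB.symmetricPart_apply]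
    using congrArg Subtype.val hBright

end Derivative

end Matrix

open Filter Topology in
/-- The Cholesky factorization map `C` is Fréchet differentiable, within the
subspace of symmetric matrices, at every symmetric positive-definite matrix
`A`; its derivative `D` sends each symmetric `Δ` to the unique lower-triangular
solution of `D(Δ) * Lᵀ + L * D(Δ)ᵀ = Δ`, where `L = C(A)`. -/
theorem cholesky_hasFDerivWithinAt (n : ℕ)
    (C : Matrix (Fin n) (Fin n) ℝ → Matrix (Fin n) (Fin n) ℝ)
    (hC : ∀ B : Matrix (Fin n) (Fin n) ℝ, Bᵀ = B →
      (∀ x : Fin n → ℝ, x ≠ 0 → 0 < x ⬝ᵥ B.mulVec x) →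
      (∀ i j, i < j → C B i j = 0) ∧ (∀ i, 0 < C B i i) ∧ C B * (C B)ᵀ = B)
    (A : Matrix (Fin n) (Fin n) ℝ) (hAsym : Aᵀ = A)
    (hApd : ∀ x : Fin n → ℝ, x ≠ 0 → 0 < x ⬝ᵥ A.mulVec x) :
    ∃ D : Matrix (Fin n) (Fin n) ℝ →L[ℝ] Matrix (Fin n) (Fin n) ℝ,
      HasFDerivWithinAt C D {B : Matrix (Fin n) (Fin n) ℝ | Bᵀ = B} A ∧
      ∀ Δ : Matrix (Fin n) (Fin n) ℝ, Δᵀ = Δ →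
        (∀ i j, i < j → D Δ i j = 0) ∧
        D Δ * (C A)ᵀ + C A * (D Δ)ᵀ = Δ := by
  have hA : IsCholeskyFactor A (C A) := hC A hAsym hApd
  obtain ⟨F, hF, hFfac⟩ := hA.exists_hasFDerivAt_eventually_isCholeskyFactor
  have hCF : C =ᶠ[𝓝[{B | Bᵀ = B}] A] F := by
    filter_upwards [nhdsWithin_le_nhds hFfac, self_mem_nhdsWithin] with B hFB hB
    have hCB : IsCholeskyFactor B (C B) := hC B hB fun x hx => (hFB hB).dotProduct_mulVec_pos hx
    exact hCB.unique (hFB hB)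
  refine ⟨_, hF.hasFDerivWithinAt.congr_of_eventuallyEq hCF (hCF.self_of_nhdsWithin hAsym),
    fun Δ hΔ => ?_⟩
  set e := lyapunovEquiv hA.1 hA.isUnit_det
  have hΔ' : symmetricPart Δ = ⟨Δ, hΔ⟩ := IsSymm.symmetricPart_apply hΔ
  simp only [ContinuousLinearMap.comp_apply, hΔ']
  exact ⟨fun i j hij => (e.symm ⟨Δ, hΔ⟩).2 hij, congrArg Subtype.val (e.apply_symm_apply _)⟩
end
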